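/- Assume there exists A ⊆ Fin m with v(A) ≥ w(A) + 1, and let α be a real number with 0 < α ≤ 1. Suppose S is a subset of the ground set and ℓ ∈ {1,…,k−1} are such that v''_ℓ(S) − v''_{ℓ+1}(S) ≥ α · max_T (v''_ℓ(T) − v''_{ℓ+1}(T)), where the max is over all subsets T of the ground set. Then v(S_ℓ) − w(S_ℓ) ≥ α · max_{B ⊆ Fin m} (v(B) − w(B)). (That is, any α-approximation to the SADP instance VT(v,w) yields an α-approximation to the ODP instance (v,w).) -/

import Mathlib

/-!
Put `c = k + ℓ`. The functions `v_ℓ` and `v_{ℓ+1}` differ only in the weight on the copy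
`M_ℓ`, so `v_ℓ(S) − v_{ℓ+1}(S) = c·(v(S_ℓ) − w(S_ℓ))`; truncating both at the same level
can only shrink a positive difference, so `v''_ℓ(S) − v''_{ℓ+1}(S) ≤ max(c·(v(S_ℓ) − w(S_ℓ)), 0)`.
Conversely, placing an optimal ODP set `B` in the copy `M_ℓ` gives a set whose value
`c·v(B) ≤ 2k·v([m])` is not truncated, so the SADP optimum is at least `c·max_B (v(B) − w(B))`,
which is positive by the gap assumption. Dividing by `c` transfers the approximation ratio.
-/

open Finset

/-- The `i`-th coordinate of a subset of the ground set consisting of `k−1`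
disjoint copies of `Fin m`: the part of `S` inside copy `M_i`, viewed as a
subset of `Fin m`. (Copies are indexed `0,…,k−2`, copy `i` being `M_{i+1}`.) -/
def copyPart (m k : ℕ) (S : Finset (Fin (k - 1) × Fin m)) (i : Fin (k - 1)) :
    Finset (Fin m) :=
  (S.filter (fun p => p.1 = i)).image Prod.snd

/-- The scaled disjoint union `v_ℓ(S) = Σ_{i≥ℓ} (k+i)·v(S_i) + Σ_{i<ℓ} (k+i)·w(S_i)`
(indices `i ∈ {1,…,k−1}`, here represented by `Fin (k-1)` shifted by one). -/
def scaledDU (m k : ℕ) (v w : Finset (Fin m) → ℕ) (ℓ : ℕ)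
    (S : Finset (Fin (k - 1) × Fin m)) : ℕ :=
  ∑ i : Fin (k - 1), (k + (i : ℕ) + 1) *
    (if ℓ ≤ (i : ℕ) + 1 then v (copyPart m k S i) else w (copyPart m k S i))

/-- `v''_ℓ`, the `ℓ`-th function of the instance `VT(v,w)`: the value truncation
at `x = 2k·v([m])` of the scaled disjoint union `v_ℓ`. -/
def VTfun (m k : ℕ) (v w : Finset (Fin m) → ℕ) (ℓ : ℕ)
    (S : Finset (Fin (k - 1) × Fin m)) : ℕ :=
  min (scaledDU m k v w ℓ S) (2 * k * v (Finset.univ : Finset (Fin m)))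

variable {m k : ℕ}

lemma copyPart_singleton_product (i₀ i : Fin (k - 1)) (B : Finset (Fin m)) :
    copyPart m k ({i₀} ×ˢ B) i = if i = i₀ then B else ∅ := by
  ext x
  split_ifs with h
  · subst h
    simp [copyPart]
  · simp [copyPart, Ne.symm h]

lemma scaledDU_singleton_product (v w : Finset (Fin m) → ℕ) (hv0 : v ∅ = 0) (hw0 : w ∅ = 0)
    (ℓ : ℕ) (i : Fin (k - 1)) (B : Finset (Fin m)) :
    scaledDU m k v w ℓ ({i} ×ˢ B) = (k + i + 1) * (if ℓ ≤ i + 1 then v B else w B) := by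
  rw [scaledDU, sum_eq_single_of_mem i (mem_univ i)]
  · rw [copyPart_singleton_product, if_pos rfl]
  · intro j _ hj
    rw [copyPart_singleton_product, if_neg hj]
    split_ifs <;> simp [hv0, hw0]

lemma scaledDU_sub_scaledDU_succ (v w : Finset (Fin m) → ℕ) (ℓ : ℕ) (i : Fin (k - 1))
    (hi : (i : ℕ) + 1 = ℓ) (S : Finset (Fin (k - 1) × Fin m)) :
    (scaledDU m k v w ℓ S : ℤ) - scaledDU m k v w (ℓ + 1) S
      = (k + ℓ) * ((v (copyPart m k S i) : ℤ) - w (copyPart m k S i)) := by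
  subst hi
  simp only [scaledDU, Nat.cast_sum, Nat.cast_mul, ← sum_sub_distrib]
  rw [sum_eq_single_of_mem i (mem_univ i)]
  · rw [if_pos le_rfl, if_neg (by omega)]
    push_cast
    ring
  · intro j _ hj
    have hj' : (j : ℕ) ≠ i := fun h => hj (Fin.ext h)
    rw [if_congr (show (i : ℕ) + 1 ≤ j + 1 ↔ (i : ℕ) + 1 + 1 ≤ j + 1 by omega) rfl rfl, sub_self]

lemma VTfun_sub_VTfun_succ_le (v w : Finset (Fin m) → ℕ) (ℓ : ℕ) (i : Fin (k - 1))
    (hi : (i : ℕ) + 1 = ℓ) (S : Finset (Fin (k - 1) × Fin m)) :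
    (VTfun m k v w ℓ S : ℤ) - VTfun m k v w (ℓ + 1) S
      ≤ max ((k + ℓ) * ((v (copyPart m k S i) : ℤ) - w (copyPart m k S i))) 0 := by
  rw [← scaledDU_sub_scaledDU_succ v w ℓ i hi S, VTfun, VTfun]
  omega

lemma le_VTfun_sub_VTfun_succ_singleton_product (v w : Finset (Fin m) → ℕ)
    (hv0 : v ∅ = 0) (hw0 : w ∅ = 0) (hvmono : ∀ A B : Finset (Fin m), A ⊆ B → v A ≤ v B)
    (ℓ : ℕ) (i : Fin (k - 1)) (hi : (i : ℕ) + 1 = ℓ) (B : Finset (Fin m)) :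
    (k + ℓ) * ((v B : ℤ) - w B)
      ≤ (VTfun m k v w ℓ ({i} ×ˢ B) : ℤ) - VTfun m k v w (ℓ + 1) ({i} ×ˢ B) := by
  have hdiff := scaledDU_sub_scaledDU_succ v w ℓ i hi ({i} ×ˢ B)
  rw [copyPart_singleton_product, if_pos rfl] at hdiff
  have hval : scaledDU m k v w ℓ ({i} ×ˢ B) = (k + ℓ) * v B := by
    rw [scaledDU_singleton_product v w hv0 hw0, if_pos hi.ge, ← hi, add_assoc]
  have huntruncated : scaledDU m k v w ℓ ({i} ×ˢ B) ≤ 2 * k * v univ := by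
    rw [hval]
    exact Nat.mul_le_mul (by omega) (hvmono B univ (subset_univ B))
  rw [← hdiff, VTfun, VTfun]
  omega

lemma le_of_mul_le_max_mul_zero {c x d : ℝ} (hc : 0 < c) (hx : 0 < x)
    (h : c * x ≤ max (c * d) 0) : x ≤ d := by
  rcases le_max_iff.1 h with h | h
  · exact le_of_mul_le_mul_left h hc
  · nlinarith

/-- Any `α`-approximation to the SADP instance `VT(v,w)` yields an
`α`-approximation to the ODP instance `(v,w)`: if
`v''_ℓ(S) − v''_{ℓ+1}(S) ≥ α·max_T (v''_ℓ(T) − v''_{ℓ+1}(T))`, then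
`v(S_ℓ) − w(S_ℓ) ≥ α·max_B (v(B) − w(B))`. -/
theorem VT_approx_yields_ODP_approx (m k : ℕ)
    (v w : Finset (Fin m) → ℕ)
    (hv0 : v ∅ = 0) (hw0 : w ∅ = 0)
    (hvmono : ∀ A B : Finset (Fin m), A ⊆ B → v A ≤ v B)
    (hgap : ∃ A : Finset (Fin m), w A + 1 ≤ v A)
    (α : ℝ) (hα0 : 0 < α)
    (S : Finset (Fin (k - 1) × Fin m))
    (ℓ : ℕ) (hℓ1 : 1 ≤ ℓ) (hℓk : ℓ ≤ k - 1)
    (happrox : α *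
        (((Finset.univ : Finset (Fin (k - 1) × Fin m)).powerset.sup'
            ⟨∅, Finset.empty_mem_powerset _⟩
            (fun T => (VTfun m k v w ℓ T : ℤ) - VTfun m k v w (ℓ + 1) T) : ℤ) : ℝ)
      ≤ (VTfun m k v w ℓ S : ℝ) - (VTfun m k v w (ℓ + 1) S : ℝ)) :
    α * (((Finset.univ : Finset (Fin m)).powerset.sup'
          ⟨∅, Finset.empty_mem_powerset _⟩
          (fun B => (v B : ℤ) - w B) : ℤ) : ℝ)
      ≤ (v (copyPart m k S ⟨ℓ - 1, by omega⟩) : ℝ)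
        - (w (copyPart m k S ⟨ℓ - 1, by omega⟩) : ℝ) := by
  set i : Fin (k - 1) := ⟨ℓ - 1, by omega⟩
  have hi : (i : ℕ) + 1 = ℓ := by simp only [i]; omega
  set M := (univ : Finset (Fin m)).powerset.sup' ⟨∅, empty_mem_powerset _⟩
    (fun B => (v B : ℤ) - w B)
  set N := (univ : Finset (Fin (k - 1) × Fin m)).powerset.sup' ⟨∅, empty_mem_powerset _⟩
    (fun T => (VTfun m k v w ℓ T : ℤ) - VTfun m k v w (ℓ + 1) T)
  obtain ⟨A, hA⟩ := hgap
  have hM : 1 ≤ M := by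
    have := le_sup' (fun B => (v B : ℤ) - w B) (mem_powerset.2 (subset_univ A))
    omega
  obtain ⟨B, -, hB⟩ := exists_mem_eq_sup' ⟨∅, empty_mem_powerset univ⟩
    (fun B => (v B : ℤ) - w B)
  replace hB : M = v B - w B := hB
  have hN : (k + ℓ) * M ≤ N := le_sup'_of_le _ (mem_powerset.2 (subset_univ ({i} ×ˢ B)))
    (hB ▸ le_VTfun_sub_VTfun_succ_singleton_product v w hv0 hw0 hvmono ℓ i hi B)
  have key : ((k : ℝ) + ℓ) * (α * M)
      ≤ max (((k : ℝ) + ℓ) * ((v (copyPart m k S i) : ℝ) - w (copyPart m k S i))) 0 :=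
    calc ((k : ℝ) + ℓ) * (α * M) = α * (((k + ℓ) * M : ℤ) : ℝ) := by push_cast; ring
      _ ≤ α * N := by gcongr
      _ ≤ _ := happrox
      _ ≤ _ := by exact_mod_cast VTfun_sub_VTfun_succ_le v w ℓ i hi S
  have hM' : (1 : ℝ) ≤ M := by exact_mod_cast hM
  exact le_of_mul_le_max_mul_zero (by positivity) (by positivity) key
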